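/- arXiv:2509.16974 — 2 statements merged into one kernel-verified Lean document; each statement's English description precedes it below -/
import Mathlib

section
/- Let μ be a Borel probability measure on ℝ^d with finite second moment, and let ψ : ℝ^d → ℝ be twice continuously differentiable with ψ integrable with respect to μ, ∫‖∇ψ(x)‖² dμ(x) < ∞, and with the operator norm of the Hessian uniformly bounded: ‖∇²ψ(x)‖ ≤ L for all x, where L > 0. Then for every real h with |h| ≤ 1/L, setting T = Id + h∇ψ and ν = T_#μ: (i) every coupling γ of μ and ν satisfies ∫‖x − y‖² dγ(x,y) ≥ h²·∫‖∇ψ(x)‖² dμ(x); (ii) the coupling (Id × T)_#μ has quadratic cost exactly h²·∫‖∇ψ‖² dμ. Consequently the infimum of ∫‖x−y‖² dγ over all couplings γ of μ and ν (i.e. the squared 2-Wasserstein distance W₂(μ, T_#μ)²) equals h²·∫‖∇ψ‖² dμ, so T is an optimal transport map from μ to T_#μ. -/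
/-!
The potential `φ x = ‖x‖ ^ 2 / 2 + h * ψ x` has gradient `T = id + h • ∇ψ`, and `T` is monotone
because `∇ψ` is `L`-Lipschitz and `|h| * L ≤ 1`; so `φ` lies above its tangent planes. Hence
`⟪x, y⟫ ≤ φ x + φ* y` for all `x, y`, with equality when `y = T x`. Integrating against a coupling
`γ` of `μ` and `T_#μ` gives `∫ ⟪x, y⟫ dγ ≤ ∫ ⟪x, T x⟫ dμ`, and since `∫ ‖x‖²` and `∫ ‖y‖²` only
depend on the marginals, expanding `‖x - y‖²` shows that the coupling carried by the graph of `T`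
is the cheapest one; its cost is `∫ ‖h • ∇ψ‖² dμ`.
-/

open MeasureTheory Set
open scoped RealInnerProductSpace ENNReal NNReal

section Convexity

variable {E : Type*} [NormedAddCommGroup E] [InnerProductSpace ℝ E]

theorem inner_add_smul_sub_nonneg_of_lipschitzWith {g : E → E} {K : ℝ≥0} (hg : LipschitzWith K g)
    {h : ℝ} (hhK : |h| * K ≤ 1) (x y : E) :
    0 ≤ ⟪(x + h • g x) - (y + h • g y), x - y⟫ := by
  have hcs : |⟪g x - g y, x - y⟫| ≤ K * ‖x - y‖ ^ 2 := by
    calc |⟪g x - g y, x - y⟫| ≤ ‖g x - g y‖ * ‖x - y‖ := abs_real_inner_le_norm _ _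
      _ ≤ K * ‖x - y‖ * ‖x - y‖ := by gcongr; exact hg.norm_sub_le x y
      _ = K * ‖x - y‖ ^ 2 := by ring
  have hexp : ⟪(x + h • g x) - (y + h • g y), x - y⟫ = ‖x - y‖ ^ 2 + h * ⟪g x - g y, x - y⟫ := by
    rw [add_sub_add_comm, ← smul_sub, inner_add_left, real_inner_smul_left,
      real_inner_self_eq_norm_sq]
  have hpert : |h * ⟪g x - g y, x - y⟫| ≤ ‖x - y‖ ^ 2 := by
    rw [abs_mul]
    calc |h| * |⟪g x - g y, x - y⟫| ≤ |h| * (K * ‖x - y‖ ^ 2) := by gcongr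
      _ = (|h| * K) * ‖x - y‖ ^ 2 := by ring
      _ ≤ ‖x - y‖ ^ 2 := mul_le_of_le_one_left (by positivity) hhK
  rw [hexp]
  linarith [neg_abs_le (h * ⟪g x - g y, x - y⟫)]

variable [CompleteSpace E]

theorem add_inner_le_of_monotone_hasGradientAt {f : E → ℝ} {f' : E → E}
    (hf : ∀ x, HasGradientAt f (f' x) x) (hmono : ∀ x y, 0 ≤ ⟪f' x - f' y, x - y⟫) (x y : E) :
    f y + ⟪f' y, x - y⟫ ≤ f x := by
  set v := x - y
  have hline : ∀ t : ℝ, HasDerivAt (fun t : ℝ => f (y + t • v)) ⟪f' (y + t • v), v⟫ t := by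
    intro t
    have hpath : HasDerivAt (fun t : ℝ => y + t • v) v t := by
      simpa using ((hasDerivAt_id t).smul_const v).const_add y
    have := (hf _).hasFDerivAt.comp_hasDerivAt t hpath
    rw [InnerProductSpace.toDual_apply_apply] at this
    exact this
  obtain ⟨c, ⟨hc0, -⟩, hc⟩ := exists_hasDerivAt_eq_slope _ _ zero_lt_one
    (HasDerivAt.continuousOn fun t _ => hline t) fun t _ => hline t
  have hslope : ⟪f' (y + c • v), v⟫ = f x - f y := by simpa [v] using hc
  have hcv : 0 ≤ c * (⟪f' (y + c • v), v⟫ - ⟪f' y, v⟫) := by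
    simpa [inner_sub_left, inner_smul_right] using hmono (y + c • v) y
  nlinarith

theorem hasGradientAt_half_norm_sq_add_mul {ψ : E → ℝ} {x : E} (hψ : DifferentiableAt ℝ ψ x)
    (h : ℝ) : HasGradientAt (fun x => ‖x‖ ^ 2 / 2 + h * ψ x) (x + h • gradient ψ x) x := by
  rw [hasGradientAt_iff_hasFDerivAt]
  have hsq : HasFDerivAt (fun x : E => ‖x‖ ^ 2) (2 • innerSL ℝ x) x :=
    (hasStrictFDerivAt_norm_sq x).hasFDerivAt
  have := (hsq.mul_const 2⁻¹).add (hψ.hasFDerivAt.const_mul h)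
  refine (this.congr_fderiv ?_).congr_of_eventuallyEq (.of_forall fun y => ?_)
  · ext v
    simp only [InnerProductSpace.toDual_apply_apply, add_apply,
      smul_apply, innerSL_apply_apply, inner_add_left, real_inner_smul_left,
      inner_gradient_left, smul_eq_mul]
    ring
  · simp only [Pi.add_apply]; ring

theorem ContDiff.differentiable_gradient {ψ : E → ℝ} (hψ : ContDiff ℝ 2 ψ) :
    Differentiable ℝ (gradient ψ) :=
  (InnerProductSpace.toDual ℝ E).symm.differentiable.comp
    ((hψ.fderiv_right (m := 1) le_rfl).differentiable one_ne_zero)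

theorem ContDiff.lipschitzWith_gradient {ψ : E → ℝ} (hψ : ContDiff ℝ 2 ψ) {L : ℝ}
    (hL : ∀ x, ‖fderiv ℝ (gradient ψ) x‖ ≤ L) : LipschitzWith L.toNNReal (gradient ψ) :=
  lipschitzWith_of_nnnorm_fderiv_le hψ.differentiable_gradient fun x =>
    NNReal.coe_le_coe.1 ((hL x).trans (Real.le_coe_toNNReal L))

end Convexity

namespace MeasureTheory

variable {α E : Type*} [MeasurableSpace α] {μ : Measure α} [NormedAddCommGroup E] {f g : α → E}

theorem MemLp.integrable_norm_sq (hf : MemLp f 2 μ) : Integrable (fun x => ‖f x‖ ^ 2) μ :=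
  (memLp_two_iff_integrable_sq_norm hf.1).1 hf

theorem lintegral_nnnorm_sq_eq_ofReal_integral (hf : MemLp f 2 μ) :
    ∫⁻ x, (‖f x‖₊ : ℝ≥0∞) ^ 2 ∂μ = ENNReal.ofReal (∫ x, ‖f x‖ ^ 2 ∂μ) := by
  rw [ofReal_integral_eq_lintegral_ofReal hf.integrable_norm_sq (.of_forall fun _ => by positivity)]
  refine lintegral_congr fun x => ?_
  rw [ENNReal.ofReal_pow (norm_nonneg _), ofReal_norm, enorm_eq_nnnorm]

variable [InnerProductSpace ℝ E]

theorem MemLp.integrable_inner (hf : MemLp f 2 μ) (hg : MemLp g 2 μ) :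
    Integrable (fun x => ⟪f x, g x⟫) μ := by
  rw [← memLp_one_iff_integrable]
  exact hf.of_bilin (fun a b => ⟪a, b⟫) 1 hg (hf.1.inner hg.1)
    (.of_forall fun x => by simpa using nnnorm_inner_le_nnnorm (𝕜 := ℝ) (f x) (g x))

theorem integral_norm_sub_sq (hf : MemLp f 2 μ) (hg : MemLp g 2 μ) :
    ∫ x, ‖f x - g x‖ ^ 2 ∂μ =
      ∫ x, ‖f x‖ ^ 2 ∂μ - 2 * ∫ x, ⟪f x, g x⟫ ∂μ + ∫ x, ‖g x‖ ^ 2 ∂μ := by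
  simp_rw [norm_sub_sq_real]
  have hinner := (hf.integrable_inner hg).const_mul 2
  rw [integral_add (by exact hf.integrable_norm_sq.sub hinner) hg.integrable_norm_sq,
    integral_sub hf.integrable_norm_sq hinner, integral_const_mul]

end MeasureTheory

section FenchelConjugate

variable {E : Type*} [NormedAddCommGroup E] [InnerProductSpace ℝ E]

/-- `EReal`-valued because the supremum can be `⊤` (e.g. for `φ = 0` and `y ≠ 0`). -/
noncomputable def fenchelConjugate (φ : E → ℝ) (y : E) : EReal :=
  ⨆ x, ((⟪x, y⟫ - φ x : ℝ) : EReal)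

theorem inner_sub_le_fenchelConjugate (φ : E → ℝ) (x y : E) :
    ((⟪x, y⟫ - φ x : ℝ) : EReal) ≤ fenchelConjugate φ y :=
  le_iSup (fun x => ((⟪x, y⟫ - φ x : ℝ) : EReal)) x

theorem fenchelConjugate_eq_of_forall_add_inner_le {φ : E → ℝ} {y z : E}
    (hsub : ∀ x, φ z + ⟪y, x - z⟫ ≤ φ x) :
    fenchelConjugate φ y = ((⟪z, y⟫ - φ z : ℝ) : EReal) := by
  refine le_antisymm (iSup_le fun x => EReal.coe_le_coe_iff.2 ?_)
    (inner_sub_le_fenchelConjugate φ z y)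
  have := hsub x
  rw [inner_sub_right, real_inner_comm x, real_inner_comm z] at this
  linarith

theorem lowerSemicontinuous_fenchelConjugate (φ : E → ℝ) :
    LowerSemicontinuous (fenchelConjugate φ) :=
  lowerSemicontinuous_iSup fun _ => (continuous_coe_real_ereal.comp
    ((continuous_const.inner continuous_id).sub continuous_const)).lowerSemicontinuous

end FenchelConjugate

section Coupling

variable {E : Type*} [NormedAddCommGroup E] [MeasurableSpace E] [BorelSpace E] {μ : Measure E}
  {T : E → E}

theorem lintegral_nnnorm_sub_sq_map_graph [SecondCountableTopology E] (hT : Measurable T)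
    (hμ : MemLp (fun x => x) 2 μ) (hTμ : MemLp T 2 μ) :
    ∫⁻ p, (‖p.1 - p.2‖₊ : ℝ≥0∞) ^ 2 ∂(μ.map fun x => (x, T x)) =
      ENNReal.ofReal (∫ z, ‖z - T z‖ ^ 2 ∂μ) := by
  rw [lintegral_map (by fun_prop) (measurable_id'.prodMk hT)]
  exact lintegral_nnnorm_sq_eq_ofReal_integral (hμ.sub hTμ)

variable [InnerProductSpace ℝ E] {φ : E → ℝ} {γ : Measure (E × E)}

theorem integral_inner_le_of_forall_add_inner_le (hT : Measurable T) (hφ : Integrable φ μ)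
    (hsub : ∀ x z, φ z + ⟪T z, x - z⟫ ≤ φ x) (hTint : Integrable (fun z => ⟪z, T z⟫) μ)
    (hγ₁ : γ.map Prod.fst = μ) (hγ₂ : γ.map Prod.snd = μ.map T)
    (hγint : Integrable (fun p : E × E => ⟪p.1, p.2⟫) γ) :
    ∫ p, ⟪p.1, p.2⟫ ∂γ ≤ ∫ z, ⟪z, T z⟫ ∂μ := by
  set G : E → ℝ := fun y => (fenchelConjugate φ y).toReal
  have hconjT : ∀ z, fenchelConjugate φ (T z) = ((⟪z, T z⟫ - φ z : ℝ) : EReal) := fun z =>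
    fenchelConjugate_eq_of_forall_add_inner_le (hsub · z)
  have hGT : ∀ z, G (T z) = ⟪z, T z⟫ - φ z := fun z => by
    simp only [G, hconjT, EReal.toReal_coe]
  have hconj : Measurable (fenchelConjugate φ) :=
    (lowerSemicontinuous_fenchelConjugate φ).measurable
  have hG : Measurable G := hconj.ereal_toReal
  have hGν : Integrable G (μ.map T) :=
    (integrable_map_measure hG.aestronglyMeasurable hT.aemeasurable).2
      ((hTint.sub hφ).congr (.of_forall fun z => (hGT z).symm))
  -- the conjugate is finite on the range of `T`, which carries the second marginal of `γ`
  have hfinite : ∀ᵐ p ∂γ, fenchelConjugate φ p.2 ≠ ⊤ := by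
    refine ae_of_ae_map (p := fun y => fenchelConjugate φ y ≠ ⊤) measurable_snd.aemeasurable ?_
    rw [hγ₂]
    exact (ae_map_iff hT.aemeasurable (hconj (measurableSet_singleton ⊤).compl)).2
      (.of_forall fun z => by simp only [hconjT]; exact EReal.coe_ne_top _)
  have hle : ∀ᵐ p ∂γ, ⟪p.1, p.2⟫ ≤ φ p.1 + G p.2 := by
    filter_upwards [hfinite] with p hp
    have := EReal.toReal_le_toReal (inner_sub_le_fenchelConjugate φ p.1 p.2)
      (EReal.coe_ne_bot _) hp
    simp only [EReal.toReal_coe] at this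
    linarith
  have hφγ : Integrable (fun p : E × E => φ p.1) γ :=
    (hγ₁ ▸ hφ).comp_measurable measurable_fst
  have hGγ : Integrable (fun p : E × E => G p.2) γ :=
    (hγ₂ ▸ hGν).comp_measurable measurable_snd
  calc ∫ p, ⟪p.1, p.2⟫ ∂γ ≤ ∫ p, (φ p.1 + G p.2) ∂γ := integral_mono_ae hγint (hφγ.add hGγ) hle
    _ = ∫ z, φ z ∂μ + ∫ z, G (T z) ∂μ := by
      rw [integral_add hφγ hGγ, ← integral_map measurable_fst.aemeasurable (hγ₁ ▸ hφ.1),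
        ← integral_map measurable_snd.aemeasurable (hγ₂ ▸ hGν.1), hγ₁, hγ₂,
        integral_map hT.aemeasurable hGν.1]
    _ = ∫ z, ⟪z, T z⟫ ∂μ := by
      simp_rw [hGT]
      rw [integral_sub hTint hφ]
      ring

theorem lintegral_nnnorm_sub_sq_map_graph_le [SecondCountableTopology E] (hT : Measurable T)
    (hφ : Integrable φ μ) (hsub : ∀ x z, φ z + ⟪T z, x - z⟫ ≤ φ x)
    (hμ : MemLp (fun x => x) 2 μ) (hTμ : MemLp T 2 μ)
    (hγ₁ : γ.map Prod.fst = μ) (hγ₂ : γ.map Prod.snd = μ.map T) :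
    ∫⁻ p, (‖p.1 - p.2‖₊ : ℝ≥0∞) ^ 2 ∂(μ.map fun x => (x, T x)) ≤
      ∫⁻ p, (‖p.1 - p.2‖₊ : ℝ≥0∞) ^ 2 ∂γ := by
  have hν : MemLp (fun y => y) 2 (μ.map T) :=
    (memLp_map_measure_iff aestronglyMeasurable_id hT.aemeasurable).2 hTμ
  have hfst : MemLp (fun p : E × E => p.1) 2 γ :=
    (hγ₁ ▸ hμ).comp_of_map measurable_fst.aemeasurable
  have hsnd : MemLp (fun p : E × E => p.2) 2 γ :=
    (hγ₂ ▸ hν).comp_of_map measurable_snd.aemeasurable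
  have hnorm_sq : Measurable fun x : E => ‖x‖ ^ 2 := measurable_norm.pow_const 2
  have hfst_sq : ∫ p, ‖p.1‖ ^ 2 ∂γ = ∫ x, ‖x‖ ^ 2 ∂μ := by
    rw [← hγ₁, integral_map measurable_fst.aemeasurable hnorm_sq.aestronglyMeasurable]
  have hsnd_sq : ∫ p, ‖p.2‖ ^ 2 ∂γ = ∫ z, ‖T z‖ ^ 2 ∂μ := by
    rw [← integral_map measurable_snd.aemeasurable hnorm_sq.aestronglyMeasurable, hγ₂,
      integral_map hT.aemeasurable hnorm_sq.aestronglyMeasurable]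
  have hinner := integral_inner_le_of_forall_add_inner_le hT hφ hsub (hμ.integrable_inner hTμ)
    hγ₁ hγ₂ (hfst.integrable_inner hsnd)
  rw [lintegral_nnnorm_sub_sq_map_graph hT hμ hTμ,
    lintegral_nnnorm_sq_eq_ofReal_integral (f := fun p : E × E => p.1 - p.2) (hfst.sub hsnd)]
  refine ENNReal.ofReal_le_ofReal ?_
  rw [integral_norm_sub_sq hμ hTμ, integral_norm_sub_sq hfst hsnd, hfst_sq, hsnd_sq]
  linarith

end Coupling

theorem perturbation_optimal_transport_general {d : ℕ}
    (μ : Measure (EuclideanSpace ℝ (Fin d)))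
    (hmom : Integrable (fun x => ‖x‖ ^ 2) μ)
    (ψ : EuclideanSpace ℝ (Fin d) → ℝ) (hψ : ContDiff ℝ 2 ψ)
    (hψint : Integrable ψ μ)
    (hgradint : Integrable (fun x => ‖gradient ψ x‖ ^ 2) μ)
    (L : ℝ) (hL : 0 < L)
    (hHess : ∀ x, ‖fderiv ℝ (gradient ψ) x‖ ≤ L)
    (h : ℝ) (hh : |h| ≤ 1 / L) :
    (∀ γ : Measure (EuclideanSpace ℝ (Fin d) × EuclideanSpace ℝ (Fin d)),
        γ.map Prod.fst = μ →
        γ.map Prod.snd = μ.map (fun x => x + h • gradient ψ x) →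
        ENNReal.ofReal (h ^ 2 * ∫ x, ‖gradient ψ x‖ ^ 2 ∂μ)
          ≤ ∫⁻ p, (‖p.1 - p.2‖₊ : ENNReal) ^ 2 ∂γ)
    ∧ (∫⁻ p, (‖p.1 - p.2‖₊ : ENNReal) ^ 2
          ∂(μ.map (fun x => (x, x + h • gradient ψ x)))
        = ENNReal.ofReal (h ^ 2 * ∫ x, ‖gradient ψ x‖ ^ 2 ∂μ))
    ∧ (⨅ γ ∈ {γ : Measure (EuclideanSpace ℝ (Fin d) × EuclideanSpace ℝ (Fin d)) |
          γ.map Prod.fst = μ ∧ γ.map Prod.snd = μ.map (fun x => x + h • gradient ψ x)},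
        ∫⁻ p, (‖p.1 - p.2‖₊ : ENNReal) ^ 2 ∂γ)
        = ENNReal.ofReal (h ^ 2 * ∫ x, ‖gradient ψ x‖ ^ 2 ∂μ) := by
  set T := fun x => x + h • gradient ψ x
  have hgrad := hψ.differentiable_gradient
  have hT : Measurable T := (continuous_id.add (hgrad.continuous.const_smul h)).measurable
  have hμ : MemLp (fun x => x) 2 μ :=
    (memLp_two_iff_integrable_sq_norm aestronglyMeasurable_id).2 hmom
  have hgradμ : MemLp (gradient ψ) 2 μ :=
    (memLp_two_iff_integrable_sq_norm hgrad.continuous.aestronglyMeasurable).2 hgradint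
  have hTμ : MemLp T 2 μ := hμ.add (hgradμ.const_smul h)
  have hhL : |h| * L.toNNReal ≤ 1 := by
    rw [Real.coe_toNNReal _ hL.le]; exact (le_div_iff₀ hL).1 hh
  have hsub : ∀ x z, (‖z‖ ^ 2 / 2 + h * ψ z) + ⟪T z, x - z⟫ ≤ ‖x‖ ^ 2 / 2 + h * ψ x :=
    add_inner_le_of_monotone_hasGradientAt
      (fun x => hasGradientAt_half_norm_sq_add_mul (hψ.differentiable two_ne_zero x) h)
      (inner_add_smul_sub_nonneg_of_lipschitzWith (hψ.lipschitzWith_gradient hHess) hhL)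
  have hcost : ∫⁻ p, (‖p.1 - p.2‖₊ : ℝ≥0∞) ^ 2 ∂(μ.map fun x => (x, T x)) =
      ENNReal.ofReal (h ^ 2 * ∫ x, ‖gradient ψ x‖ ^ 2 ∂μ) := by
    rw [lintegral_nnnorm_sub_sq_map_graph hT hμ hTμ, ← integral_const_mul]
    congr 2 with x
    simp [T, norm_smul, mul_pow]
  have hφ : Integrable (fun x => ‖x‖ ^ 2 / 2 + h * ψ x) μ :=
    (hmom.div_const 2).add (hψint.const_mul h)
  have hopt := fun γ => lintegral_nnnorm_sub_sq_map_graph_le (γ := γ) hT hφ hsub hμ hTμ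
  refine ⟨fun γ hγ₁ hγ₂ => hcost ▸ hopt γ hγ₁ hγ₂, hcost, ?_⟩
  refine hcost ▸ le_antisymm (iInf₂_le _ ⟨?_, ?_⟩) (le_iInf₂ fun γ hγ => hopt γ hγ.1 hγ.2)
  · exact (Measure.fst_map_prodMk hT).trans Measure.map_id'
  · exact Measure.snd_map_prodMk measurable_id'

/-- For a `C²` function `ψ` with uniformly bounded Hessian (`‖∇²ψ(x)‖ ≤ L`) and `|h| ≤ 1/L`,
the map `T = Id + h ∇ψ` is an optimal transport map from `μ` to `T_#μ`:
(i) every coupling of `μ` and `T_#μ` has quadratic cost at least `h² ∫‖∇ψ‖² dμ`;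
(ii) the coupling induced by `T` has quadratic cost exactly `h² ∫‖∇ψ‖² dμ`;
and consequently the squared 2-Wasserstein distance `W₂(μ, T_#μ)²` (the infimum of the
quadratic cost over all couplings) equals `h² ∫‖∇ψ‖² dμ`. -/
theorem perturbation_optimal_transport {d : ℕ}
    (μ : Measure (EuclideanSpace ℝ (Fin d))) [IsProbabilityMeasure μ]
    (hmom : Integrable (fun x => ‖x‖ ^ 2) μ)
    (ψ : EuclideanSpace ℝ (Fin d) → ℝ) (hψ : ContDiff ℝ 2 ψ)
    (hψint : Integrable ψ μ)
    (hgradint : Integrable (fun x => ‖gradient ψ x‖ ^ 2) μ)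
    (L : ℝ) (hL : 0 < L)
    (hHess : ∀ x, ‖fderiv ℝ (gradient ψ) x‖ ≤ L)
    (h : ℝ) (hh : |h| ≤ 1 / L) :
    (∀ γ : Measure (EuclideanSpace ℝ (Fin d) × EuclideanSpace ℝ (Fin d)),
        γ.map Prod.fst = μ →
        γ.map Prod.snd = μ.map (fun x => x + h • gradient ψ x) →
        ENNReal.ofReal (h ^ 2 * ∫ x, ‖gradient ψ x‖ ^ 2 ∂μ)
          ≤ ∫⁻ p, (‖p.1 - p.2‖₊ : ENNReal) ^ 2 ∂γ)
    ∧ (∫⁻ p, (‖p.1 - p.2‖₊ : ENNReal) ^ 2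
          ∂(μ.map (fun x => (x, x + h • gradient ψ x)))
        = ENNReal.ofReal (h ^ 2 * ∫ x, ‖gradient ψ x‖ ^ 2 ∂μ))
    ∧ (⨅ γ ∈ {γ : Measure (EuclideanSpace ℝ (Fin d) × EuclideanSpace ℝ (Fin d)) |
          γ.map Prod.fst = μ ∧ γ.map Prod.snd = μ.map (fun x => x + h • gradient ψ x)},
        ∫⁻ p, (‖p.1 - p.2‖₊ : ENNReal) ^ 2 ∂γ)
        = ENNReal.ofReal (h ^ 2 * ∫ x, ‖gradient ψ x‖ ^ 2 ∂μ) :=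
  perturbation_optimal_transport_general μ hmom ψ hψ hψint hgradint L hL hHess h hh
end

section
/- For u, v ∈ ℝ^k define u_t = u + t(v − u) for t ∈ ℝ and g(t) = (1/2)‖u_t u_t^⊤ − v v^⊤‖_F². Then g is a polynomial function of t and its derivatives at t = 0 satisfy g''(0) = ‖v − u‖⁴ − 3‖u u^⊤ − v v^⊤‖_F² − 4·g'(0). -/
/-!
The squared Frobenius norm of `x xᵀ - y yᵀ` is `‖x‖⁴ - 2⟪x, y⟫² + ‖y‖⁴`. Along `u_t = u + t(v - u)`,
`‖u_t‖²` is quadratic and `⟪u_t, v⟫` is linear in `t`, so `g = ½(A² - 2B² + ‖v‖⁴)` with `A`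
quadratic and `B` linear. Hence `g` is a quartic polynomial, and both sides of the identity become
polynomials in `‖u‖²`, `‖v‖²` and `⟪u, v⟫` that agree.
-/

open Finset Polynomial

theorem EuclideanSpace.sum_sum_mul_sub_mul_sq {ι : Type*} [Fintype ι] (x y : EuclideanSpace ℝ ι) :
    ∑ i, ∑ j, (x i * x j - y i * y j) ^ 2 = ‖x‖ ^ 4 - 2 * inner ℝ x y ^ 2 + ‖y‖ ^ 4 := by
  have hexpand (i j : ι) : (x i * x j - y i * y j) ^ 2
      = x i ^ 2 * x j ^ 2 - 2 * ((x i * y i) * (x j * y j)) + y i ^ 2 * y j ^ 2 := by ring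
  have hnorm (z : EuclideanSpace ℝ ι) : ‖z‖ ^ 4 = (∑ i, z i ^ 2) ^ 2 := by
    rw [show 4 = 2 * 2 from rfl, pow_mul, EuclideanSpace.norm_sq_eq]
    simp only [Real.norm_eq_abs, sq_abs]
  have hinner : inner ℝ x y = ∑ i, x i * y i := by
    simp only [PiLp.inner_apply, RCLike.inner_apply, conj_trivial, mul_comm]
  simp_rw [hexpand, sum_add_distrib, sum_sub_distrib, ← mul_sum, ← sum_mul, hnorm, hinner]
  ring

theorem norm_add_smul_sq {F : Type*} [SeminormedAddCommGroup F] [InnerProductSpace ℝ F]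
    (u w : F) (t : ℝ) :
    ‖u + t • w‖ ^ 2 = ‖u‖ ^ 2 + 2 * inner ℝ u w * t + ‖w‖ ^ 2 * t ^ 2 := by
  rw [norm_add_sq_real, norm_smul, real_inner_smul_right, mul_pow, Real.norm_eq_abs, sq_abs]
  ring

theorem derivs_zero_of_eq_half_sq_sub_two_sq (a b c d e f : ℝ) (φ : ℝ → ℝ)
    (hφ : ∀ t, φ t = (1 / 2) * ((a + 2 * b * t + c * t ^ 2) ^ 2 - 2 * (d + e * t) ^ 2 + f)) :
    (∃ P : ℝ[X], ∀ t, φ t = P.eval t) ∧ deriv φ 0 = 2 * a * b - 2 * d * e ∧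
      deriv (deriv φ) 0 = 4 * b ^ 2 + 2 * a * c - 2 * e ^ 2 := by
  set P : ℝ[X] :=
    C (1 / 2) * ((C a + C (2 * b) * X + C c * X ^ 2) ^ 2 - C 2 * (C d + C e * X) ^ 2 + C f)
  have hP : φ = fun t ↦ P.eval t := by
    funext t
    simp [hφ, P]
  have hderiv (Q : ℝ[X]) : deriv (fun t ↦ Q.eval t) = fun t ↦ Q.derivative.eval t :=
    funext fun _ ↦ Q.deriv
  refine ⟨⟨P, fun t ↦ by rw [hP]⟩, ?_, ?_⟩
  all_goals
    simp only [hP, hderiv]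
    simp only [P, derivative_mul, derivative_pow, derivative_add, derivative_sub, derivative_C,
      derivative_X, derivative_zero, derivative_one, eval_add, eval_mul, eval_sub, eval_C, eval_X,
      eval_pow, eval_zero, eval_one]
    ring

/-- The squared Frobenius norm of a `k × k` matrix is written as the double sum of squared
entries. -/
theorem second_deriv_matrix_decomposition {k : ℕ} (u v : EuclideanSpace ℝ (Fin k))
    (g : ℝ → ℝ)
    (hg : ∀ t : ℝ, g t = (1 / 2 : ℝ) *
      ∑ i : Fin k, ∑ j : Fin k,
        ((u i + t * (v i - u i)) * (u j + t * (v j - u j)) - v i * v j) ^ 2) :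
    (∃ p : Polynomial ℝ, ∀ t, g t = p.eval t)
    ∧ deriv (deriv g) 0
        = ‖v - u‖ ^ 4
          - 3 * (∑ i : Fin k, ∑ j : Fin k, (u i * u j - v i * v j) ^ 2)
          - 4 * deriv g 0 := by
  have hg' (t : ℝ) : g t = (1 / 2) * ((‖u‖ ^ 2 + 2 * inner ℝ u (v - u) * t + ‖v - u‖ ^ 2 * t ^ 2) ^ 2
      - 2 * (inner ℝ u v + inner ℝ (v - u) v * t) ^ 2 + ‖v‖ ^ 4) := by
    have h := EuclideanSpace.sum_sum_mul_sub_mul_sq (u + t • (v - u)) v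
    simp only [PiLp.add_apply, PiLp.smul_apply, PiLp.sub_apply, smul_eq_mul] at h
    rw [hg, h, show 4 = 2 * 2 from rfl, pow_mul, norm_add_smul_sq, inner_add_left,
      real_inner_smul_left]
    ring
  obtain ⟨hpoly, hd1, hd2⟩ := derivs_zero_of_eq_half_sq_sub_two_sq _ _ _ _ _ _ g hg'
  refine ⟨hpoly, ?_⟩
  rw [hd2, hd1, EuclideanSpace.sum_sum_mul_sub_mul_sq, show 4 = 2 * 2 from rfl, pow_mul,
    norm_sub_sq_real, inner_sub_right, inner_sub_left, real_inner_self_eq_norm_sq,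
    real_inner_self_eq_norm_sq, real_inner_comm v u]
  ring
end
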